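/- arXiv:0905.4248 — 5 statements merged into one kernel-verified Lean document; each statement's English description precedes it below -/
import Mathlib

section
/- For every finite abelian group G, every zero-sum sequence B over G satisfies max L(B) ≥ (|B| − η(G) + 1)/exp(G), where η(G) = s_{≤exp(G)}(G). -/
open Multiset

/-- A nonempty zero-sum sequence (multiset) over `G`. -/
def IsZeroSumSeq {G : Type*} [AddCommGroup G] (S : Multiset G) : Prop :=
  S ≠ 0 ∧ S.sum = 0

/-- A minimal zero-sum sequence: nonempty, zero-sum, and with no proper
nonempty zero-sum subsequence. -/
def IsMinZeroSum {G : Type*} [AddCommGroup G] (S : Multiset G) : Prop :=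
  S ≠ 0 ∧ S.sum = 0 ∧ ∀ T : Multiset G, T ≤ S → T ≠ 0 → T.sum = 0 → T = S

/-- `ζ` is a factorization of `B` into minimal zero-sum sequences. -/
def IsFactorization {G : Type*} [AddCommGroup G] (ζ : Multiset (Multiset G))
    (B : Multiset G) : Prop :=
  ζ.sum = B ∧ ∀ A ∈ ζ, IsMinZeroSum A

/-- The set of lengths `L(B)` of factorizations of `B` into minimal zero-sum
sequences. -/
def lengthSet {G : Type*} [AddCommGroup G] (B : Multiset G) : Set ℕ :=
  { n | ∃ ζ : Multiset (Multiset G), IsFactorization ζ B ∧ Multiset.card ζ = n }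

/-- `max L(B)`, the maximal length of a factorization of `B` into minimal
zero-sum sequences. -/
noncomputable def maxL {G : Type*} [AddCommGroup G] (B : Multiset G) : ℕ :=
  sSup (lengthSet B)

/-- `S` contains `k` disjoint nonempty zero-sum subsequences. -/
def HasKDisjointZeroSum {G : Type*} [AddCommGroup G] (k : ℕ) (S : Multiset G) : Prop :=
  ∃ T : Multiset (Multiset G), Multiset.card T = k ∧
    (∀ A ∈ T, IsZeroSumSeq A) ∧ T.sum ≤ S

/-- The `k`-wise Davenport constant: the smallest `ℓ` such that every sequence
over `G` of length at least `ℓ` has `k` disjoint nonempty zero-sum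
subsequences. -/
noncomputable def Dk (G : Type*) [AddCommGroup G] (k : ℕ) : ℕ :=
  sInf { ℓ : ℕ | ∀ S : Multiset G, ℓ ≤ Multiset.card S → HasKDisjointZeroSum k S }

/-- `s_{≤ k}(G)` as an extended natural number: the smallest `m` such that every
sequence over `G` of length at least `m` has a nonempty zero-sum subsequence of
length at most `k`. -/
noncomputable def sLE (G : Type*) [AddCommGroup G] (k : ℕ) : ℕ∞ :=
  sInf { m : ℕ∞ | ∀ S : Multiset G, m ≤ (Multiset.card S : ℕ∞) →
    ∃ T ≤ S, T ≠ 0 ∧ T.sum = 0 ∧ Multiset.card T ≤ k }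

/-- `s_{≤ k}(G)` as a natural number (used when it is known to be finite). -/
noncomputable def sleN (G : Type*) [AddCommGroup G] (k : ℕ) : ℕ :=
  sInf { m : ℕ | ∀ S : Multiset G, m ≤ Multiset.card S →
    ∃ T ≤ S, T ≠ 0 ∧ T.sum = 0 ∧ Multiset.card T ≤ k }

/-- `η(G) = s_{≤ exp(G)}(G)`. -/
noncomputable def etaC (G : Type*) [AddCommGroup G] : ℕ :=
  sleN G (AddMonoid.exponent G)


/-! As long as at least `η(G)` terms remain, remove from `B` a nonempty zero-sum subsequence of
length at most `exp(G)`; then factor every removed piece, and the final remainder, into minimal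
zero-sum sequences. Each removed piece contributes at least one atom and fewer than `η(G)` terms
are left at the end, so the resulting factorization, of length `k ≤ max L(B)`, satisfies
`|B| < η(G) + exp(G) · k`. -/

namespace Multiset

lemma tsub_lt_self_of_le {α : Type*} [DecidableEq α] {S T : Multiset α} (hTS : T ≤ S)
    (hT : T ≠ 0) : S - T < S := by
  refine lt_of_le_of_ne tsub_le_self fun h => hT (card_eq_zero.mp ?_)
  have hcard := congrArg card h
  rw [card_sub hTS] at hcard
  have := card_le_card hTS
  omega

variable {G : Type*} [AddCommGroup G] [DecidableEq G]

lemma sum_tsub_of_sum_eq_zero {S T : Multiset G} (hTS : T ≤ S) (hT : T.sum = 0) :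
    (S - T).sum = S.sum := by
  rw [← add_tsub_cancel_of_le hTS, sum_add, hT, zero_add, add_tsub_cancel_left]

omit [DecidableEq G] in
lemma exists_isMinZeroSum_le {S : Multiset G} (hS : IsZeroSumSeq S) :
    ∃ T ≤ S, IsMinZeroSum T := by
  obtain ⟨T, ⟨hTS, hT0, hTsum⟩, hTmin⟩ :=
    wellFounded_lt.has_min {T : Multiset G | T ≤ S ∧ IsZeroSumSeq T} ⟨S, le_rfl, hS⟩
  refine ⟨T, hTS, hT0, hTsum, fun U hUT hU0 hUsum => ?_⟩
  by_contra hne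
  exact hTmin U ⟨hUT.trans hTS, hU0, hUsum⟩ (lt_of_le_of_ne hUT hne)

end Multiset

section Factorization

variable {G : Type*} [AddCommGroup G]

lemma IsFactorization.zero : IsFactorization (0 : Multiset (Multiset G)) 0 :=
  ⟨sum_zero, by simp⟩

lemma IsFactorization.singleton {A : Multiset G} (hA : IsMinZeroSum A) :
    IsFactorization {A} A :=
  ⟨sum_singleton A, by simpa using hA⟩

lemma IsFactorization.add {ζ₁ ζ₂ : Multiset (Multiset G)} {B₁ B₂ : Multiset G}
    (h₁ : IsFactorization ζ₁ B₁) (h₂ : IsFactorization ζ₂ B₂) :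
    IsFactorization (ζ₁ + ζ₂) (B₁ + B₂) := by
  refine ⟨by rw [sum_add, h₁.1, h₂.1], fun A hA => ?_⟩
  rcases mem_add.mp hA with h | h
  exacts [h₁.2 A h, h₂.2 A h]

lemma IsFactorization.ne_zero {ζ : Multiset (Multiset G)} {B : Multiset G}
    (h : IsFactorization ζ B) (hB : B ≠ 0) : ζ ≠ 0 := by
  rintro rfl
  exact hB (h.1 ▸ sum_zero)

lemma IsFactorization.card_le {ζ : Multiset (Multiset G)} {B : Multiset G}
    (h : IsFactorization ζ B) : card ζ ≤ card B := by
  have hpos : ∀ n ∈ ζ.map card, 1 ≤ n := by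
    simp only [mem_map, forall_exists_index, and_imp]
    rintro _ A hA rfl
    exact card_pos.mpr (h.2 A hA).1
  rw [← h.1]
  show card ζ ≤ card ζ.join
  simpa [card_join] using card_nsmul_le_sum hpos

lemma exists_isFactorization (B : Multiset G) (hB : B.sum = 0) :
    ∃ ζ, IsFactorization ζ B := by
  classical
  induction B using strongInductionOn with
  | ih B ih =>
    by_cases hB0 : B = 0
    · exact ⟨0, hB0 ▸ IsFactorization.zero⟩
    obtain ⟨A, hAB, hA⟩ := exists_isMinZeroSum_le ⟨hB0, hB⟩
    have hrest : (B - A).sum = 0 := by rw [sum_tsub_of_sum_eq_zero hAB hA.2.1, hB]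
    obtain ⟨ζ, hζ⟩ := ih (B - A) (tsub_lt_self_of_le hAB hA.1) hrest
    exact ⟨{A} + ζ, add_tsub_cancel_of_le hAB ▸ (IsFactorization.singleton hA).add hζ⟩

lemma bddAbove_lengthSet (B : Multiset G) : BddAbove (lengthSet B) :=
  ⟨card B, by rintro _ ⟨ζ, hζ, rfl⟩; exact hζ.card_le⟩

lemma exists_isFactorization_card_lt {m k : ℕ}
    (hshort : ∀ S : Multiset G, m ≤ card S → ∃ T ≤ S, T ≠ 0 ∧ T.sum = 0 ∧ card T ≤ k)
    (B : Multiset G) (hB : B.sum = 0) :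
    ∃ ζ, IsFactorization ζ B ∧ card B < m + k * card ζ := by
  classical
  induction B using strongInductionOn with
  | ih B ih =>
    by_cases hsmall : card B < m
    · obtain ⟨ζ, hζ⟩ := exists_isFactorization B hB
      exact ⟨ζ, hζ, by omega⟩
    obtain ⟨T, hTB, hT0, hTsum, hTk⟩ := hshort B (not_lt.mp hsmall)
    have hrest : (B - T).sum = 0 := by rw [sum_tsub_of_sum_eq_zero hTB hTsum, hB]
    obtain ⟨ζ, hζ, hcard⟩ := ih (B - T) (tsub_lt_self_of_le hTB hT0) hrest
    obtain ⟨ζT, hζT⟩ := exists_isFactorization T hTsum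
    have hζT0 : 1 ≤ card ζT := card_pos.mpr (hζT.ne_zero hT0)
    refine ⟨ζT + ζ, add_tsub_cancel_of_le hTB ▸ hζT.add hζ, ?_⟩
    have hcardB : card B = card T + card (B - T) := by
      rw [← card_add, add_tsub_cancel_of_le hTB]
    have : k ≤ k * card ζT := Nat.le_mul_of_pos_right k hζT0
    rw [card_add, Nat.mul_add]
    omega

end Factorization

section Eta

variable {G : Type*} [AddCommGroup G] [Finite G]

lemma exists_zeroSum_le_exponent_of_card_le (S : Multiset G)
    (hS : Nat.card G * AddMonoid.exponent G ≤ card S) :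
    ∃ T ≤ S, T ≠ 0 ∧ T.sum = 0 ∧ card T ≤ AddMonoid.exponent G := by
  classical
  have := Fintype.ofFinite G
  obtain ⟨g, -, hg⟩ : ∃ g ∈ Finset.univ, AddMonoid.exponent G ≤ S.count g := by
    refine Finset.exists_le_of_sum_le Finset.univ_nonempty ?_
    simpa [sum_count_eq_card, Nat.card_eq_fintype_card] using hS
  have hexp : AddMonoid.exponent G ≠ 0 := AddMonoid.ExponentExists.of_finite.exponent_ne_zero
  exact ⟨replicate _ g, le_count_iff_replicate_le.mp hg, by simpa [← card_eq_zero] using hexp,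
    by simp [AddMonoid.exponent_nsmul_eq_zero], by simp⟩

lemma exists_zeroSum_le_exponent_of_etaC_le (S : Multiset G) (hS : etaC G ≤ card S) :
    ∃ T ≤ S, T ≠ 0 ∧ T.sum = 0 ∧ card T ≤ AddMonoid.exponent G :=
  Nat.sInf_mem (s := {m : ℕ | ∀ S : Multiset G, m ≤ card S →
      ∃ T ≤ S, T ≠ 0 ∧ T.sum = 0 ∧ card T ≤ AddMonoid.exponent G})
    ⟨_, exists_zeroSum_le_exponent_of_card_le⟩ S hS

end Eta

theorem statement5 {G : Type*} [AddCommGroup G] [Fintype G]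
    (B : Multiset G) (hB : B.sum = 0) :
    ((Multiset.card B : ℚ) - (etaC G : ℚ) + 1) / (AddMonoid.exponent G : ℚ) ≤
      (maxL B : ℚ) := by
  obtain ⟨ζ, hζ, hlt⟩ :=
    exists_isFactorization_card_lt exists_zeroSum_le_exponent_of_etaC_le B hB
  have hζB : card ζ ≤ maxL B := le_csSup (bddAbove_lengthSet B) ⟨ζ, hζ, rfl⟩
  have hexp : (0 : ℚ) < AddMonoid.exponent G := by
    exact_mod_cast AddMonoid.ExponentExists.of_finite.exponent_pos
  have hlt' : (card B : ℚ) + 1 ≤ etaC G + AddMonoid.exponent G * card ζ := by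
    exact_mod_cast hlt
  rw [div_le_iff₀ hexp]
  calc (card B : ℚ) - etaC G + 1 ≤ AddMonoid.exponent G * card ζ := by linarith
    _ ≤ maxL B * AddMonoid.exponent G := by
      rw [mul_comm]; gcongr
end

section
/- Let p be a prime, r ≥ 2, k ≥ 1, and m ≥ 1 with r(p−1)+1 < 2p^m. Then D_k(C_p^r) ≤ min{(k(r−1)+1)p − r + 1, (k−1)p^m + r(p−1) + 1}. -/
open Multiset

/-!
Olson's group-ring argument: if `G` is generated by elements `b i` with `p ^ e i • b i = 0`, the
augmentation ideal of `𝔽_p[G]` is generated by the elements `[b i] - 1`, and in characteristic `p`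
`([b i] - 1) ^ p ^ e i = [p ^ e i • b i] - 1 = 0`, so its `(1 + ∑ (p ^ e i - 1))`-th power vanishes.
Thus `∏ ([g] - 1)` over a sequence of that length is zero, whereas its coefficient at `0` is
`(-1) ^ length` when no nonempty subsequence sums to zero.

Applied to `C_p^r ⊕ C_{p^m}` and the sequence of the `(g, 1)`, this gives a zero-sum subsequence
whose length is a multiple of `p^m` and at most `r(p-1) + p^m`. If that length exceeds the target
`L` (`L = (r-1)p` with `m = 1`, or `L = p^m`), it is forced to be `L + p^m ≤ 2L`, and splitting off
a zero-sum subsequence of length at most `D(C_p^r) = r(p-1) + 1` leaves two zero-sum pieces, one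
of length at most `L`. Removing such short zero-sum subsequences one at a time yields `k`
disjoint ones.
-/

namespace Ideal

variable {R : Type*} [CommSemiring R]

-- One better than `Ideal.sup_pow_add_le_pow_sup_pow`; Olson's bound needs the exact exponent.
theorem sup_pow_add_add_one_le (I J : Ideal R) (n m : ℕ) :
    (I ⊔ J) ^ (n + m + 1) ≤ I ^ (n + 1) ⊔ J ^ (m + 1) := by
  rw [← add_eq_sup, ← add_eq_sup, add_pow, sum_eq_sup]
  refine Finset.sup_le fun i _ => ?_
  by_cases hi : n + 1 ≤ i
  · exact mul_le_left.trans (mul_le_left.trans ((pow_le_pow_right hi).trans le_sup_left))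
  · exact mul_le_left.trans (mul_le_right.trans
      ((pow_le_pow_right (by omega)).trans le_sup_right))

theorem span_range_pow_eq_bot {ι : Type*} [Fintype ι] (w : ι → R) (n : ι → ℕ)
    (hw : ∀ i, w i ^ (n i + 1) = 0) :
    span (Set.range w) ^ (∑ i, n i + 1) = ⊥ := by
  classical
  suffices ∀ s : Finset ι, (⨆ i ∈ s, span {w i}) ^ (∑ i ∈ s, n i + 1) = ⊥ by
    simpa [← Set.iUnion_singleton_eq_range, span_iUnion] using this Finset.univ
  intro s
  induction s using Finset.induction with
  | empty => simp
  | insert a s ha ih =>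
    rw [Finset.iSup_insert, Finset.sum_insert ha, ← le_bot_iff, add_assoc]
    refine (sup_pow_add_add_one_le _ _ _ _).trans ?_
    rw [ih, span_singleton_pow, hw, span_singleton_eq_bot.2 rfl, sup_bot_eq]

theorem multiset_prod_map_mem_pow {α : Type*} {I : Ideal R} {f : α → R} {S : Multiset α}
    (h : ∀ x ∈ S, f x ∈ I) : (S.map f).prod ∈ I ^ card S := by
  induction S using Multiset.induction_on with
  | empty => simp
  | cons x S ih =>
    rw [Multiset.map_cons, Multiset.prod_cons, Multiset.card_cons, pow_succ']
    exact mul_mem_mul (h x (Multiset.mem_cons_self x S))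
      (ih fun y hy => h y (Multiset.mem_cons_of_mem hy))

end Ideal

namespace AddMonoidAlgebra

variable {k G : Type*} [CommRing k] [AddCommGroup G]

theorem single_sub_one_mem_span_of_closure_eq_top {ι : Type*} {b : ι → G}
    (hb : AddSubgroup.closure (Set.range b) = ⊤) (g : G) :
    single g (1 : k) - 1 ∈ Ideal.span (Set.range fun i => single (b i) (1 : k) - 1) := by
  have hg : g ∈ AddSubgroup.closure (Set.range b) := hb ▸ AddSubgroup.mem_top g
  induction hg using AddSubgroup.closure_induction with
  | mem _ hx =>
    obtain ⟨i, rfl⟩ := hx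
    exact Ideal.subset_span ⟨i, rfl⟩
  | zero => simp [← one_def]
  | add x y _ _ hx hy =>
    have : single (x + y) (1 : k) - 1 =
        (single x 1 - 1) * (single y 1 - 1) + (single x 1 - 1) + (single y 1 - 1) := by
      rw [show single (x + y) (1 : k) = single x 1 * single y 1 by
        rw [single_mul_single, one_mul]]
      ring
    rw [this]
    exact add_mem (add_mem (Ideal.mul_mem_left _ _ hy) hx) hy
  | neg x _ hx =>
    have : single (-x) (1 : k) - 1 = -single (-x) 1 * (single x 1 - 1) := by
      rw [neg_mul, mul_sub, single_mul_single, neg_add_cancel, one_mul, ← one_def, mul_one]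
      ring
    rw [this]
    exact Ideal.mul_mem_left _ _ hx

theorem single_sub_one_pow_eq_zero (p : ℕ) [Fact p.Prime] [CharP k p] {g : G} {e : ℕ}
    (hg : p ^ e • g = 0) : (single g (1 : k) - 1) ^ p ^ e = 0 := by
  have : CharP k[G] p :=
    charP_of_injective_ringHom (f := singleZeroRingHom) single_right_injective p
  rw [sub_pow_char_pow, single_pow, one_pow, hg, ← one_def, one_pow, sub_self]

theorem coeff_prod_single_sub_one_eq_zero {S : Multiset G} {g : G}
    (hg : ∀ T ≤ S, T.sum ≠ g) : (S.map fun x => single x (1 : k) - 1).prod.coeff g = 0 := by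
  induction S using Multiset.induction_on generalizing g with
  | empty =>
    have : (0 : G) ≠ g := hg 0 le_rfl
    simp [one_def, this]
  | cons x S ih =>
    have hx : ∀ T ≤ S, T.sum ≠ -x + g := fun T hT hsum =>
      hg (x ::ₘ T) (Multiset.cons_le_cons x hT) (by rw [Multiset.sum_cons, hsum]; abel)
    have hS : ∀ T ≤ S, T.sum ≠ g := fun T hT => hg T (hT.trans (Multiset.le_cons_self S x))
    simp [sub_mul, ih hx, ih hS]

theorem coeff_zero_prod_single_sub_one {S : Multiset G}
    (hS : ∀ T ≤ S, T ≠ 0 → T.sum ≠ 0) :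
    (S.map fun x => single x (1 : k) - 1).prod.coeff 0 = (-1) ^ card S := by
  induction S using Multiset.induction_on with
  | empty => simp [one_def]
  | cons x S ih =>
    have hx : ∀ T ≤ S, T.sum ≠ -x := fun T hT hsum =>
      hS (x ::ₘ T) (Multiset.cons_le_cons x hT) Multiset.cons_ne_zero
        (by rw [Multiset.sum_cons, hsum, add_neg_cancel])
    have hS' : ∀ T ≤ S, T ≠ 0 → T.sum ≠ 0 := fun T hT =>
      hS T (hT.trans (Multiset.le_cons_self S x))
    simp [sub_mul, coeff_prod_single_sub_one_eq_zero hx, ih hS', pow_succ]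

end AddMonoidAlgebra

open AddMonoidAlgebra in
theorem exists_le_isZeroSumSeq_of_generators {G : Type*} [AddCommGroup G] (p : ℕ) [Fact p.Prime]
    {ι : Type*} [Fintype ι] {b : ι → G} (hb : AddSubgroup.closure (Set.range b) = ⊤)
    (e : ι → ℕ) (he : ∀ i, p ^ e i • b i = 0) (S : Multiset G)
    (hS : ∑ i, (p ^ e i - 1) + 1 ≤ card S) : ∃ T ≤ S, IsZeroSumSeq T := by
  by_contra! hS0
  let J : Ideal (ZMod p)[G] := Ideal.span (Set.range fun i => single (b i) 1 - 1)
  have hJ : J ^ card S = ⊥ := by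
    refine le_bot_iff.1 ((Ideal.pow_le_pow_right hS).trans
      (Ideal.span_range_pow_eq_bot _ (fun i => p ^ e i - 1) fun i => ?_).le)
    rw [Nat.sub_add_cancel (Nat.one_le_pow _ _ (Fact.out : p.Prime).pos)]
    exact single_sub_one_pow_eq_zero p (he i)
  have hprod : (S.map fun x => single x (1 : ZMod p) - 1).prod = 0 := by
    rw [← Ideal.mem_bot, ← hJ]
    exact Ideal.multiset_prod_map_mem_pow fun x _ => single_sub_one_mem_span_of_closure_eq_top hb x
  have hcoeff := coeff_zero_prod_single_sub_one (k := ZMod p) fun T hT hT0 hsum =>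
    hS0 T hT ⟨hT0, hsum⟩
  rw [hprod] at hcoeff
  exact (isUnit_one.neg.pow _).ne_zero hcoeff.symm

theorem Multiset.exists_le_card_eq {α : Type*} {S : Multiset α} {n : ℕ} (hn : n ≤ card S) :
    ∃ T ≤ S, card T = n := by
  obtain ⟨T, hT⟩ := card_pos_iff_exists_mem.1
    (by rw [card_powersetCard]; exact Nat.choose_pos hn : 0 < card (S.powersetCard n))
  exact ⟨T, mem_powersetCard.1 hT⟩

theorem exists_le_isZeroSumSeq_card_le_of_lt {G : Type*} [AddCommGroup G] {I J : Multiset G}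
    (hI : I.sum = 0) (hJ : IsZeroSumSeq J) (hJI : J ≤ I) (hlt : card J < card I) {L : ℕ}
    (hL : card I ≤ 2 * L) : ∃ T ≤ I, IsZeroSumSeq T ∧ card T ≤ L := by
  classical
  by_cases hJL : card J ≤ L
  · exact ⟨J, hJI, hJ, hJL⟩
  have hcard : card (I - J) = card I - card J := Multiset.card_sub hJI
  refine ⟨I - J, tsub_le_self, ⟨fun h => ?_, ?_⟩, by omega⟩
  · rw [h, Multiset.card_zero] at hcard
    omega
  · rw [← add_right_cancel_iff (a := J.sum), ← Multiset.sum_add, tsub_add_cancel_of_le hJI, hI,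
      hJ.2, add_zero]

theorem HasKDisjointZeroSum.succ_of_le {G : Type*} [AddCommGroup G] [DecidableEq G] {k : ℕ}
    {S T : Multiset G} (hTS : T ≤ S) (hT : IsZeroSumSeq T) (h : HasKDisjointZeroSum k (S - T)) :
    HasKDisjointZeroSum (k + 1) S := by
  obtain ⟨𝒯, hcard, hzero, hsum⟩ := h
  refine ⟨T ::ₘ 𝒯, by rw [Multiset.card_cons, hcard], ?_, ?_⟩
  · intro A hA
    rcases Multiset.mem_cons.1 hA with rfl | hA
    exacts [hT, hzero A hA]
  · rw [Multiset.sum_cons]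
    calc T + 𝒯.sum ≤ T + (S - T) := by gcongr
      _ = S := add_tsub_cancel_of_le hTS

theorem Dk_succ_le {G : Type*} [AddCommGroup G] {b e : ℕ}
    (hbase : ∀ S : Multiset G, b ≤ card S → ∃ T ≤ S, IsZeroSumSeq T)
    (hstep : ∀ S : Multiset G, b + e ≤ card S → ∃ T ≤ S, IsZeroSumSeq T ∧ card T ≤ e)
    (k : ℕ) :
    Dk G (k + 1) ≤ b + k * e := by
  classical
  refine Nat.sInf_le fun S hS => ?_
  induction k generalizing S with
  | zero =>
    obtain ⟨T, hTS, hT⟩ := hbase S (by simpa using hS)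
    exact HasKDisjointZeroSum.succ_of_le hTS hT ⟨0, rfl, by simp, by simp⟩
  | succ k ih =>
    obtain ⟨T, hTS, hT, hTcard⟩ := hstep S (by rw [add_one_mul] at hS; omega)
    refine HasKDisjointZeroSum.succ_of_le hTS hT (ih (S - T) ?_)
    rw [Multiset.card_sub hTS, add_one_mul] at *
    omega

def stdGenerator (p r m : ℕ) : Option (Fin r) → (Fin r → ZMod p) × ZMod (p ^ m)
  | none => (0, 1)
  | some i => (Pi.single i 1, 0)

def stdExponent (r m : ℕ) : Option (Fin r) → ℕ
  | none => m
  | some _ => 1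

theorem stdExponent_pow_smul_stdGenerator (p r m : ℕ) (o : Option (Fin r)) :
    p ^ stdExponent r m o • stdGenerator p r m o = 0 := by
  cases o <;> ext <;> simp [stdGenerator, stdExponent, Pi.single_apply]

theorem closure_range_stdGenerator (p r m : ℕ) [NeZero p] :
    AddSubgroup.closure (Set.range (stdGenerator p r m)) = ⊤ := by
  refine (AddSubgroup.eq_top_iff' _).2 fun g => ?_
  have hg : g = ∑ i, (g.1 i).val • stdGenerator p r m (some i) +
      g.2.val • stdGenerator p r m none := by
    ext <;> simp [stdGenerator, Prod.fst_sum, Prod.snd_sum, Finset.sum_apply, Pi.single_apply,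
      -nsmul_eq_mul]
  rw [hg]
  refine add_mem (AddSubgroup.sum_mem _ fun i _ => ?_) ?_ <;>
    exact AddSubgroup.nsmul_mem _ (AddSubgroup.subset_closure (Set.mem_range_self _)) _

theorem sum_stdExponent (p r m : ℕ) (hp : 0 < p) :
    ∑ o, (p ^ stdExponent r m o - 1) + 1 = r * (p - 1) + p ^ m := by
  have := Nat.one_le_pow m p hp
  simp only [Fintype.sum_option, stdExponent, pow_one, Finset.sum_const, Finset.card_univ,
    Fintype.card_fin, smul_eq_mul]
  omega

section ElementaryAbelian

variable (p : ℕ) [Fact p.Prime] {r : ℕ}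

theorem exists_le_isZeroSumSeq_pow_dvd_card (m : ℕ) (S : Multiset (Fin r → ZMod p))
    (hS : r * (p - 1) + p ^ m ≤ card S) :
    ∃ T ≤ S, IsZeroSumSeq T ∧ p ^ m ∣ card T ∧ card T ≤ r * (p - 1) + p ^ m := by
  obtain ⟨S₀, hS₀, hcard⟩ := Multiset.exists_le_card_eq hS
  have hlen : ∑ o, (p ^ stdExponent r m o - 1) + 1 ≤
      card (S₀.map fun g => (g, (1 : ZMod (p ^ m)))) := by
    rw [sum_stdExponent p r m (Fact.out : p.Prime).pos, Multiset.card_map, hcard]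
  obtain ⟨T, hT, hT0, hTsum⟩ := exists_le_isZeroSumSeq_of_generators p
    (closure_range_stdGenerator p r m) _ (stdExponent_pow_smul_stdGenerator p r m) _ hlen
  have hsnd : T.map Prod.snd = Multiset.replicate (card T) 1 := by
    refine Multiset.eq_replicate.2 ⟨Multiset.card_map _ _, fun x hx => ?_⟩
    obtain ⟨y, hy, rfl⟩ := Multiset.mem_map.1 hx
    obtain ⟨g, -, rfl⟩ := Multiset.mem_map.1 (Multiset.mem_of_le hT hy)
    rfl
  have hcardT : (card T : ZMod (p ^ m)) = 0 := by
    have := map_multiset_sum (AddMonoidHom.snd _ (ZMod (p ^ m))) T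
    rw [hTsum, AddMonoidHom.coe_snd, hsnd, Multiset.sum_replicate, nsmul_one] at this
    exact this.symm
  refine ⟨T.map Prod.fst, ?_, ⟨by simpa using hT0, ?_⟩, ?_, ?_⟩
  · refine ((Multiset.map_le_map hT).trans_eq ?_).trans hS₀
    simp
  · simpa [hTsum] using (map_multiset_sum (AddMonoidHom.fst (Fin r → ZMod p) _) T).symm
  · rwa [Multiset.card_map, ← ZMod.natCast_eq_zero_iff]
  · simpa [hcard] using Multiset.card_le_card hT

theorem exists_le_isZeroSumSeq_card_le (S : Multiset (Fin r → ZMod p))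
    (hS : r * (p - 1) + 1 ≤ card S) :
    ∃ T ≤ S, IsZeroSumSeq T ∧ card T ≤ r * (p - 1) + 1 := by
  obtain ⟨T, hT, hT0, -, hcard⟩ := exists_le_isZeroSumSeq_pow_dvd_card p 0 S (by simpa using hS)
  exact ⟨T, hT, hT0, by simpa using hcard⟩

theorem exists_le_isZeroSumSeq_card_le_of_pow_dvd (m L : ℕ) (hdvd : p ^ m ∣ L)
    (hle : p ^ m ≤ L) (hlt : r * (p - 1) + 1 < L + p ^ m) (S : Multiset (Fin r → ZMod p))
    (hS : r * (p - 1) + p ^ m ≤ card S) :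
    ∃ T ≤ S, IsZeroSumSeq T ∧ card T ≤ L := by
  obtain ⟨I, hIS, hI, ⟨a, ha⟩, hIcard⟩ := exists_le_isZeroSumSeq_pow_dvd_card p m S hS
  by_cases hIL : card I ≤ L
  · exact ⟨I, hIS, hI, hIL⟩
  obtain ⟨c, rfl⟩ := hdvd
  have hca : c < a := Nat.lt_of_mul_lt_mul_left (by omega : p ^ m * c < p ^ m * a)
  have hac : a < c + 2 :=
    Nat.lt_of_mul_lt_mul_left (by rw [mul_add]; omega : p ^ m * a < p ^ m * (c + 2))
  have hIeq : card I = p ^ m * c + p ^ m := by rw [ha, show a = c + 1 by omega, mul_add_one]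
  obtain ⟨J, hJI, hJ, hJcard⟩ := exists_le_isZeroSumSeq_card_le p I (by omega)
  obtain ⟨T, hTI, hT, hTcard⟩ :=
    exists_le_isZeroSumSeq_card_le_of_lt hI.2 hJ hJI (by omega) (L := p ^ m * c) (by omega)
  exact ⟨T, hTI.trans hIS, hT, hTcard⟩

end ElementaryAbelian

theorem statement8_general (p r k m : ℕ) [Fact p.Prime] (hr : 2 ≤ r) (hk : 1 ≤ k)
    (h : r * (p - 1) + 1 < 2 * p ^ m) :
    Dk (Fin r → ZMod p) k ≤
      min ((k * (r - 1) + 1) * p - r + 1) ((k - 1) * p ^ m + r * (p - 1) + 1) := by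
  obtain ⟨k, rfl⟩ := Nat.exists_eq_add_of_le' hk
  have hp : 1 ≤ p := (Fact.out : p.Prime).one_le
  have hbase (S : Multiset (Fin r → ZMod p)) (hS : r * (p - 1) + 1 ≤ card S) :
      ∃ T ≤ S, IsZeroSumSeq T :=
    (exists_le_isZeroSumSeq_card_le p S hS).imp fun _ ⟨hTS, hT, _⟩ => ⟨hTS, hT⟩
  rw [Nat.add_sub_cancel]
  refine le_min ?_ ((Dk_succ_le hbase (fun S hS => exists_le_isZeroSumSeq_card_le_of_pow_dvd p m _
    dvd_rfl le_rfl (by omega) S (by omega)) k).trans_eq (by ring))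
  have hrk : r ≤ ((k + 1) * (r - 1) + 1) * p := calc
    r ≤ (k + 1) * (r - 1) + 1 := by
      have := Nat.le_mul_of_pos_left (r - 1) (by omega : 0 < k + 1)
      omega
    _ ≤ _ := Nat.le_mul_of_pos_right _ hp
  have hpr : p ≤ (r - 1) * p := Nat.le_mul_of_pos_left p (by omega)
  have hrp : r * (p - 1) + 1 < (r - 1) * p + p := by
    zify [hp, hr.trans' one_le_two]
    nlinarith
  refine (Dk_succ_le hbase (fun S hS => exists_le_isZeroSumSeq_card_le_of_pow_dvd p 1
    ((r - 1) * p) ⟨r - 1, by ring⟩ (by rwa [pow_one]) (by rwa [pow_one]) S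
    (by rw [pow_one]; omega)) k).trans_eq ?_
  zify [hrk, hp, hr.trans' one_le_two]
  ring

theorem statement8 (p r k m : ℕ) [Fact p.Prime] (hr : 2 ≤ r) (hk : 1 ≤ k)
    (hm : 1 ≤ m) (h : r * (p - 1) + 1 < 2 * p ^ m) :
    Dk (Fin r → ZMod p) k ≤
      min ((k * (r - 1) + 1) * p - r + 1) ((k - 1) * p ^ m + r * (p - 1) + 1) :=
  statement8_general p r k m hr hk h
end

section
/- Let G = C_{n_1} ⊕ ⋯ ⊕ C_{n_r} with 1 < n_1 | ⋯ | n_r, let s ≥ 2 and t ∈ [1,r] satisfy s(s−1)/2 ≤ r − t + 1, and let k ≥ 2. Then D_k(G) ≥ D*(G) + s·⌊n_t/2⌋ + δ + (k−2)·n_r, where δ = 0 if n_t is even and δ = 1 if n_t is odd, and D*(G) = 1 + Σ_{i=1}^r (n_i − 1). -/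
open Multiset

/-!
Realize `G` as `∀ d, ZMod (n d)` and embed the `s.choose 2` pairs `{i, j}` of `Fin s` injectively
into coordinates `D {i, j} ≥ t`. Take `n_d - 1` copies of each basis vector `e_d`,
`(k - 2) * n_r` more copies of the last one `e_r`, and about `n_t / 2` copies of each
`g_i = ∑ j ≠ i, e_(D {i, j})`, the multiplicities of two `g`'s adding up to at most `n_t`.
In a pair coordinate the whole sequence has weight below `2 * n (D {i, j})`, so at most one of
`k` disjoint zero-sum subsequences meets `{g_i, g_j}`; the weight in the last coordinate then
does not suffice for `k` of them.
-/

open Function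

namespace Multiset

variable {ι α : Type*}

theorem exists_le_map_eq_of_le_map {f : ι → α} {B : Multiset α} {X : Multiset ι}
    (h : B ≤ X.map f) : ∃ A ≤ X, A.map f = B := by
  induction B using Quotient.inductionOn
  induction X using Quotient.inductionOn
  obtain ⟨l, hperm, hsub⟩ := coe_le.mp h
  obtain ⟨l', hl', rfl⟩ := List.sublist_map_iff.mp hsub
  exact ⟨l', coe_le.mpr hl'.subperm, coe_eq_coe.mpr hperm⟩

theorem exists_map_map_eq_of_sum_le_map [DecidableEq ι] {f : ι → α}
    (T : Multiset (Multiset α)) {X : Multiset ι} (h : T.sum ≤ X.map f) :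
    ∃ T' : Multiset (Multiset ι), T'.map (map f) = T ∧ T'.sum ≤ X := by
  induction T using Multiset.induction_on generalizing X with
  | empty => exact ⟨0, rfl, zero_le X⟩
  | cons B T ih =>
    rw [sum_cons] at h
    obtain ⟨A, hAX, rfl⟩ := exists_le_map_eq_of_le_map (le_of_add_le_left h)
    have hX : X = A + (X - A) := (add_tsub_cancel_of_le hAX).symm
    rw [hX, map_add] at h
    obtain ⟨T', rfl, hT'⟩ := ih (le_of_add_le_add_left h)
    refine ⟨A ::ₘ T', by rw [map_cons], ?_⟩
    rw [sum_cons, hX]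
    gcongr

theorem sum_map_eq_sum_count_nsmul [Fintype ι] [DecidableEq ι] [AddCommMonoid α]
    (A : Multiset ι) (f : ι → α) : (A.map f).sum = ∑ z, A.count z • f z := by
  rw [Finset.sum_multiset_map_count]
  refine Finset.sum_subset (Finset.subset_univ _) fun z _ hz => ?_
  rw [count_eq_zero.mpr (by simpa using hz), zero_smul]

theorem add_le_sum_of_mem_erase [DecidableEq α] {T : Multiset (Multiset α)} {A B : Multiset α}
    (hA : A ∈ T) (hB : B ∈ T.erase A) : A + B ≤ T.sum := by
  rw [← sum_erase hA]
  gcongr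
  exact le_sum_of_mem hB

theorem card_nsmul_le_map_sum {M N : Type*} [AddCommMonoid M] [AddCommMonoid N] [Preorder N]
    [AddLeftMono N] (F : M →+ N) {T : Multiset M} {a : N} (h : ∀ A ∈ T, a ≤ F A) :
    card T • a ≤ F T.sum := by
  rw [map_multiset_sum]
  simpa using card_nsmul_le_sum (s := T.map F) (by simpa using h)

end Multiset

section Davenport

variable {G ι : Type*} [AddCommGroup G]

theorem HasKDisjointZeroSum.exists_lift {k : ℕ} {f : ι → G} {X : Multiset ι}
    (h : HasKDisjointZeroSum k (X.map f)) :
    ∃ T : Multiset (Multiset ι), card T = k ∧ (∀ A ∈ T, A ≠ 0 ∧ (A.map f).sum = 0) ∧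
      T.sum ≤ X := by
  classical
  obtain ⟨T, hTk, hT, hTX⟩ := h
  obtain ⟨T', rfl, hT'X⟩ := exists_map_map_eq_of_sum_le_map T hTX
  refine ⟨T', by simpa using hTk, fun A hA => ?_, hT'X⟩
  obtain ⟨hA0, hAsum⟩ := hT _ (mem_map_of_mem _ hA)
  exact ⟨fun h => hA0 (by rw [h, map_zero]), hAsum⟩

/-- A crude threshold, only needed to make the set defining `Dk` nonempty. -/
theorem hasKDisjointZeroSum_of_card_le [Fintype G] (k : ℕ) {S : Multiset G}
    (hS : k * Fintype.card G * Fintype.card G ≤ card S) : HasKDisjointZeroSum k S := by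
  classical
  obtain ⟨x, hx⟩ : ∃ x, k * Fintype.card G ≤ S.count x := by
    by_contra! h
    have := Finset.sum_lt_sum_of_nonempty Finset.univ_nonempty fun x _ => h x
    rw [sum_count_eq_card fun a _ => Finset.mem_univ a, Finset.sum_const, Finset.card_univ,
      smul_eq_mul] at this
    linarith [mul_comm (Fintype.card G) (k * Fintype.card G)]
  refine ⟨replicate k (replicate (addOrderOf x) x), card_replicate _ _, fun A hA => ?_, ?_⟩
  · rw [eq_of_mem_replicate hA]
    exact ⟨card_pos.mp (by simpa using addOrderOf_pos x), by simp [addOrderOf_nsmul_eq_zero]⟩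
  · rw [sum_replicate, nsmul_replicate, ← le_count_iff_replicate_le]
    exact (Nat.mul_le_mul_left k addOrderOf_le_card_univ).trans hx

theorem card_add_one_le_Dk [Finite G] {k : ℕ} {S : Multiset G}
    (hS : ¬ HasKDisjointZeroSum k S) : card S + 1 ≤ Dk G k := by
  cases nonempty_fintype G
  refine le_csInf ⟨_, fun S => hasKDisjointZeroSum_of_card_le k⟩ fun ℓ hℓ => ?_
  by_contra! hlt
  exact hS (hℓ S (by omega))

end Davenport

section CoordinateWeights

variable {ι κ : Type*} [Fintype ι] [DecidableEq ι]

def countWeight (w : ι → κ → ℕ) (d : κ) : Multiset ι →+ ℕ :=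
  ∑ z, w z d • countAddMonoidHom z

theorem countWeight_apply (w : ι → κ → ℕ) (d : κ) (A : Multiset ι) :
    countWeight w d A = ∑ z, w z d * A.count z := by
  simp [countWeight]

theorem mul_count_le_countWeight (w : ι → κ → ℕ) (d : κ) (A : Multiset ι) (z : ι) :
    w z d * A.count z ≤ countWeight w d A := by
  rw [countWeight_apply]
  exact Finset.single_le_sum (f := fun z => w z d * A.count z) (fun _ _ => Nat.zero_le _)
    (Finset.mem_univ z)

theorem countWeight_mono (w : ι → κ → ℕ) (d : κ) : Monotone (countWeight w d) := by
  intro A B hAB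
  obtain ⟨C, rfl⟩ := Multiset.le_iff_exists_add.mp hAB
  simp

def IsCoordZeroSum (n : κ → ℕ) (w : ι → κ → ℕ) (A : Multiset ι) : Prop :=
  ∀ d, n d ∣ countWeight w d A

theorem sum_map_natCast_eq_zero_iff (n : κ → ℕ) (w : ι → κ → ℕ) (A : Multiset ι) :
    (A.map fun z d => (w z d : ZMod (n d))).sum = 0 ↔ IsCoordZeroSum n w A := by
  rw [sum_map_eq_sum_count_nsmul, funext_iff]
  refine forall_congr' fun d => ?_
  rw [← ZMod.natCast_eq_zero_iff, countWeight_apply, Finset.sum_apply]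
  push_cast
  simp [mul_comm]

end CoordinateWeights

section PairSequence

variable {κ β : Type*} [DecidableEq κ] [Fintype β] [DecidableEq β]
  {D : {p : Sym2 β // ¬p.IsDiag} → κ} {n : κ → ℕ} {L : κ} {X A A' : Multiset (κ ⊕ β)}

/-- The label `inl c` stands for the basis vector `e_c`, the label `inr i` for
`g_i = ∑ j ≠ i, e_(D {i, j})`. -/
def pairWeight (D : {p : Sym2 β // ¬p.IsDiag} → κ) : κ ⊕ β → κ → ℕ
  | .inl c, d => if c = d then 1 else 0
  | .inr i, d => if ∃ p, i ∈ p.1 ∧ D p = d then 1 else 0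

theorem pairWeight_inr_apply (hD : Injective D) (i : β) (p : {p : Sym2 β // ¬p.IsDiag}) :
    pairWeight D (.inr i) (D p) = if i ∈ p.1 then 1 else 0 := by
  simp [pairWeight, hD.eq_iff]

theorem sum_pairWeight_mul_le (hD : Injective D) {m : β → ℕ}
    (hm : ∀ p u w, p.1 = s(u, w) → m u + m w ≤ n (D p)) (d : κ) :
    ∑ i, pairWeight D (.inr i) d * m i ≤ n d := by
  by_cases hd : ∃ p, D p = d
  · obtain ⟨⟨q, hq⟩, rfl⟩ := hd
    induction q using Sym2.ind with
    | h u w =>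
      have huw : u ≠ w := fun h => hq (Sym2.mk_isDiag_iff.mpr h)
      have hfilter : Finset.univ.filter (· ∈ s(u, w)) = {u, w} := by ext; simp
      simp only [pairWeight_inr_apply hD, ite_mul, one_mul, zero_mul, Finset.sum_ite,
        Finset.sum_const_zero, add_zero, hfilter, Finset.sum_pair huw]
      exact hm _ u w rfl
  · have h0 : ∀ i, pairWeight D (.inr i) d = 0 := fun i =>
      if_neg fun ⟨p, _, hp⟩ => hd ⟨p, hp⟩
    simp [h0]

variable [Fintype κ]

theorem countWeight_pairWeight (d : κ) (A : Multiset (κ ⊕ β)) :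
    countWeight (pairWeight D) d A =
      A.count (.inl d) + ∑ i, pairWeight D (.inr i) d * A.count (.inr i) := by
  simp [countWeight_apply, Fintype.sum_sum_type, pairWeight]

theorem count_inl_pos_of_forall_count_inr_eq_zero
    (hXe : ∀ c ≠ L, X.count (.inl c) < n c) (hAX : A ≤ X)
    (hA : IsCoordZeroSum n (pairWeight D) A) (hA0 : A ≠ 0) (hpure : ∀ i, A.count (.inr i) = 0) :
    0 < A.count (.inl L) := by
  have hc : ∀ c ≠ L, A.count (.inl c) = 0 := fun c hc =>
    Nat.eq_zero_of_dvd_of_lt (by simpa [countWeight_pairWeight, hpure] using hA c)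
      ((count_le_of_le _ hAX).trans_lt (hXe c hc))
  obtain ⟨z, hz⟩ := exists_mem_of_ne_zero hA0
  rw [← count_pos] at hz
  rcases z with c | i
  · by_cases hcL : c = L
    · rwa [← hcL]
    · exact absurd (hc c hcL) hz.ne'
  · exact absurd (hpure i) hz.ne'

theorem le_count_inl_of_forall_count_inr_eq_zero
    (hXe : ∀ c ≠ L, X.count (.inl c) < n c) (hAX : A ≤ X)
    (hA : IsCoordZeroSum n (pairWeight D) A) (hA0 : A ≠ 0) (hpure : ∀ i, A.count (.inr i) = 0) :
    n L ≤ A.count (.inl L) :=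
  Nat.le_of_dvd (count_inl_pos_of_forall_count_inr_eq_zero hXe hAX hA hA0 hpure)
    (by simpa [countWeight_pairWeight, hpure] using hA L)

theorem le_countWeight_of_count_inr_ne_zero (hD : Injective D) {p : {p : Sym2 β // ¬p.IsDiag}}
    {i : β} (hi : i ∈ p.1) (hAi : A.count (.inr i) ≠ 0) (hA : IsCoordZeroSum n (pairWeight D) A) :
    n (D p) ≤ countWeight (pairWeight D) (D p) A := by
  refine Nat.le_of_dvd ((Nat.pos_of_ne_zero hAi).trans_le ?_) (hA (D p))
  simpa [pairWeight_inr_apply hD, hi] using mul_count_le_countWeight (pairWeight D) (D p) A (.inr i)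

/-- Two disjoint zero-sum subsequences cannot both meet `{g_i, g_j}` for `{i, j}` a pair: each
would need `n (D {i, j})` weight in that coordinate, but `X` carries less than twice that. -/
theorem count_inr_eq_zero_of_mem_pair (hD : Injective D)
    (hXe : ∀ c ≠ L, X.count (.inl c) < n c)
    (hXg : ∀ d, ∑ i, pairWeight D (.inr i) d * X.count (.inr i) ≤ n d)
    {p : {p : Sym2 β // ¬p.IsDiag}} (hpL : D p ≠ L) {i j : β} (hi : i ∈ p.1) (hj : j ∈ p.1)
    (hAA' : A + A' ≤ X) (hA : IsCoordZeroSum n (pairWeight D) A)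
    (hA' : IsCoordZeroSum n (pairWeight D) A') (hAi : A.count (.inr i) ≠ 0) :
    A'.count (.inr j) = 0 := by
  by_contra hA'j
  have hX := countWeight_mono (pairWeight D) (D p) hAA'
  rw [_root_.map_add, countWeight_pairWeight (D p) X] at hX
  have := le_countWeight_of_count_inr_ne_zero hD hi hAi hA
  have := le_countWeight_of_count_inr_ne_zero hD hj hA'j hA'
  have := hXe _ hpL
  have := hXg (D p)
  omega

theorem count_inr_eq_zero_of_pairWeight_eq_zero [Nontrivial β] (hD : Injective D)
    (hXe : ∀ c ≠ L, X.count (.inl c) < n c)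
    (hXg : ∀ d, ∑ i, pairWeight D (.inr i) d * X.count (.inr i) ≤ n d)
    {i : β} (hiL : pairWeight D (.inr i) L = 0)
    (hAA' : A + A' ≤ X) (hA : IsCoordZeroSum n (pairWeight D) A)
    (hA' : IsCoordZeroSum n (pairWeight D) A') (hAi : A.count (.inr i) ≠ 0) (j : β) :
    A'.count (.inr j) = 0 := by
  obtain ⟨w, hwi, hjw⟩ : ∃ w, w ≠ i ∧ j ∈ s(i, w) := by
    by_cases hji : j = i
    · obtain ⟨w, hw⟩ := exists_ne i
      exact ⟨w, hw, hji ▸ Sym2.mem_mk_left _ _⟩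
    · exact ⟨j, hji, Sym2.mem_mk_right _ _⟩
  let p : {p : Sym2 β // ¬p.IsDiag} := ⟨s(i, w), Sym2.mk_isDiag_iff.not.mpr hwi.symm⟩
  have hpL : D p ≠ L := fun h => by
    simp only [pairWeight, ite_eq_right_iff, one_ne_zero, imp_false, not_exists, not_and] at hiL
    exact hiL p (Sym2.mem_mk_left _ _) h
  exact count_inr_eq_zero_of_mem_pair hD hXe hXg hpL (Sym2.mem_mk_left i w) hjw hAA' hA hA' hAi

theorem le_countWeight_of_pairWeight_ne_zero (hXe : ∀ c ≠ L, X.count (.inl c) < n c)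
    (hAX : A ≤ X) (hA : IsCoordZeroSum n (pairWeight D) A) (hA0 : A ≠ 0)
    (hAL : ∀ i, A.count (.inr i) ≠ 0 → pairWeight D (.inr i) L ≠ 0) :
    n L ≤ countWeight (pairWeight D) L A := by
  refine Nat.le_of_dvd (Nat.pos_of_ne_zero fun hW => ?_) (hA L)
  have hpure : ∀ i, A.count (.inr i) = 0 := fun i => by
    by_contra hi
    have := mul_count_le_countWeight (pairWeight D) L A (.inr i)
    have := Nat.mul_pos (Nat.pos_of_ne_zero (hAL i hi)) (Nat.pos_of_ne_zero hi)
    omega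
  have := count_inl_pos_of_forall_count_inr_eq_zero hXe hAX hA hA0 hpure
  have := mul_count_le_countWeight (pairWeight D) L A (.inl L)
  simp only [pairWeight, if_true, one_mul] at this
  omega

/-- If some member meets a `g_i` with no weight in `L`, all other members are multiples of `e_L`
and exhaust its `< (k - 1) * n L` copies; otherwise every member has weight at least `n L` in
coordinate `L`, and `k` of them exceed the total weight `< k * n L` of `X` there. -/
theorem not_sum_le_of_isCoordZeroSum [Nontrivial β] (hD : Injective D)
    (hXe : ∀ c ≠ L, X.count (.inl c) < n c) {k : ℕ}
    (hXL : X.count (.inl L) < (k - 1) * n L)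
    (hXg : ∀ d, ∑ i, pairWeight D (.inr i) d * X.count (.inr i) ≤ n d)
    (T : Multiset (Multiset (κ ⊕ β))) (hTk : card T = k)
    (hT : ∀ A ∈ T, A ≠ 0 ∧ IsCoordZeroSum n (pairWeight D) A) : ¬ T.sum ≤ X := by
  intro hTX
  have hmem : ∀ A ∈ T, A ≤ X := fun A hA => (le_sum_of_mem hA).trans hTX
  by_cases hg : ∃ A₀ ∈ T, ∃ i, A₀.count (.inr i) ≠ 0 ∧ pairWeight D (.inr i) L = 0
  · obtain ⟨A₀, hA₀, i, hA₀i, hiL⟩ := hg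
    have hL : ∀ A ∈ T.erase A₀, n L ≤ countAddMonoidHom (.inl L) A := fun A hA =>
      have hAT := mem_of_mem_erase hA
      le_count_inl_of_forall_count_inr_eq_zero hXe (hmem A hAT) (hT A hAT).2 (hT A hAT).1
        (count_inr_eq_zero_of_pairWeight_eq_zero hD hXe hXg hiL
          ((add_le_sum_of_mem_erase hA₀ hA).trans hTX) (hT A₀ hA₀).2 (hT A hAT).2 hA₀i)
    have hrest : (T.erase A₀).sum ≤ X := (le_add_self.trans (sum_erase hA₀).le).trans hTX
    have := (card_nsmul_le_map_sum _ hL).trans (count_le_of_le _ hrest)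
    rw [card_erase_of_mem hA₀, hTk, Nat.pred_eq_sub_one, smul_eq_mul] at this
    omega
  · push Not at hg
    have := (card_nsmul_le_map_sum _ fun A hA => le_countWeight_of_pairWeight_ne_zero hXe
      (hmem A hA) (hT A hA).2 (hT A hA).1 (hg A hA)).trans (countWeight_mono _ _ hTX)
    rw [countWeight_pairWeight, hTk, smul_eq_mul] at this
    have := hXg L
    rcases k with _ | k
    · simp at hXL
    · rw [add_tsub_cancel_right] at hXL
      rw [add_mul, one_mul] at this
      omega

end PairSequence

section

variable {κ β : Type*} [Fintype κ] [Fintype β] {n : κ → ℕ}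

def pairSeq (n : κ → ℕ) (L : κ) (k : ℕ) (m : β → ℕ) : Multiset (κ ⊕ β) :=
  ∑ c, replicate (n c - 1) (.inl c) + replicate ((k - 2) * n L) (.inl L) +
    ∑ i, replicate (m i) (.inr i)

theorem card_pairSeq (L : κ) (k : ℕ) (m : β → ℕ) :
    card (pairSeq n L k m) = ∑ c, (n c - 1) + (k - 2) * n L + ∑ i, m i := by
  simp [pairSeq]

theorem count_inl_pairSeq [DecidableEq κ] [DecidableEq β] (L : κ) (k : ℕ) (m : β → ℕ) (c : κ) :
    (pairSeq n L k m).count (.inl c) = n c - 1 + if c = L then (k - 2) * n L else 0 := by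
  simp [pairSeq, count_sum', count_replicate, eq_comm]

theorem count_inr_pairSeq [DecidableEq κ] [DecidableEq β] (L : κ) (k : ℕ) (m : β → ℕ) (i : β) :
    (pairSeq n L k m).count (.inr i) = m i := by
  simp [pairSeq, count_sum', count_replicate]

end

theorem le_Dk_of_pairEmbedding {κ β G : Type*} [Fintype κ] [DecidableEq κ] [Fintype β]
    [DecidableEq β] [Nontrivial β] [AddCommGroup G] [Finite G] (n : κ → ℕ) (hn : ∀ d, 0 < n d)
    (φ : G ≃+ ∀ d, ZMod (n d)) {D : {p : Sym2 β // ¬p.IsDiag} → κ} (hD : Injective D)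
    (m : β → ℕ) (hm : ∀ p u w, p.1 = s(u, w) → m u + m w ≤ n (D p)) (L : κ) {k : ℕ}
    (hk : 2 ≤ k) :
    1 + ∑ c, (n c - 1) + ∑ i, m i + (k - 2) * n L ≤ Dk G k := by
  let f : κ ⊕ β → G := fun z => φ.symm fun d => (pairWeight D z d : ZMod (n d))
  have hf : ∀ A, (A.map f).sum = 0 ↔ IsCoordZeroSum n (pairWeight D) A := by
    intro A
    rw [← sum_map_natCast_eq_zero_iff, ← φ.symm.map_eq_zero_iff, map_multiset_sum, map_map]
    rfl
  have hS : ¬ HasKDisjointZeroSum k ((pairSeq n L k m).map f) := by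
    intro h
    obtain ⟨T, hTk, hT, hTX⟩ := h.exists_lift
    refine not_sum_le_of_isCoordZeroSum hD (L := L) (fun c hc => ?_) ?_ (fun d => ?_) T hTk
      (fun A hA => ⟨(hT A hA).1, (hf A).1 (hT A hA).2⟩) hTX
    · rw [count_inl_pairSeq, if_neg hc]
      have := hn c
      omega
    · obtain ⟨j, rfl⟩ := Nat.exists_eq_add_of_le' hk
      rw [count_inl_pairSeq, if_pos rfl, show j + 2 - 2 = j by omega,
        show j + 2 - 1 = j + 1 by omega, add_mul, one_mul]
      have := hn L
      omega
    · simpa only [count_inr_pairSeq] using sum_pairWeight_mul_le hD hm d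
  have := card_add_one_le_Dk hS
  rw [card_map, card_pairSeq] at this
  omega

section

variable {β : Type*} [DecidableEq β]

def halfMult (a : ℕ) (i₀ i : β) : ℕ :=
  a / 2 + if i = i₀ then a % 2 else 0

theorem halfMult_add_le (a : ℕ) (i₀ : β) {u w : β} (huw : u ≠ w) :
    halfMult a i₀ u + halfMult a i₀ w ≤ a := by
  unfold halfMult
  split_ifs with hu hw
  · exact absurd (hu.trans hw.symm) huw
  all_goals omega

theorem sum_halfMult [Fintype β] (a : ℕ) (i₀ : β) :
    ∑ i, halfMult a i₀ i = Fintype.card β * (a / 2) + a % 2 := by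
  simp [halfMult, Finset.sum_add_distrib]

end

theorem nonempty_embedding_pairs {r s : ℕ} {t : Fin (r + 1)}
    (hst : s * (s - 1) / 2 ≤ r - (t : ℕ) + 1) :
    Nonempty ({p : Sym2 (Fin s) // ¬p.IsDiag} ↪ {d : Fin (r + 1) // t ≤ d}) := by
  refine Function.Embedding.nonempty_of_card_le ?_
  rw [Sym2.card_subtype_not_diag, Fintype.card_fin, Nat.choose_two_right,
    Fintype.card_subtype, Finset.filter_le_eq_Ici, Fin.card_Ici]
  omega

theorem statement9 {G : Type*} [AddCommGroup G] [Fintype G] (r : ℕ)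
    (n : Fin (r + 1) → ℕ) (h1 : ∀ i, 1 < n i)
    (hdvd : ∀ i j : Fin (r + 1), i ≤ j → n i ∣ n j)
    (hiso : Nonempty (G ≃+ ∀ i, ZMod (n i)))
    (s : ℕ) (hs : 2 ≤ s) (t : Fin (r + 1))
    (hst : s * (s - 1) / 2 ≤ r - (t : ℕ) + 1)
    (k : ℕ) (hk : 2 ≤ k) :
    (1 + ∑ i, (n i - 1)) + s * (n t / 2) + (if Even (n t) then 0 else 1) +
        (k - 2) * n (Fin.last r) ≤ Dk G k := by
  obtain ⟨φ⟩ := hiso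
  obtain ⟨D⟩ := nonempty_embedding_pairs hst
  have : Nontrivial (Fin s) := Fin.nontrivial_iff_two_le.mpr hs
  have hn : ∀ i, 0 < n i := fun i => zero_lt_one.trans (h1 i)
  let i₀ : Fin s := ⟨0, by omega⟩
  have hm : ∀ (p : {p : Sym2 (Fin s) // ¬p.IsDiag}) u w, p.1 = s(u, w) →
      halfMult (n t) i₀ u + halfMult (n t) i₀ w ≤ n (D p) := fun p u w hp =>
    (halfMult_add_le _ _ fun h => p.2 (hp ▸ Sym2.mk_isDiag_iff.mpr h)).trans
      (Nat.le_of_dvd (hn _) (hdvd t _ (D p).2))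
  have := le_Dk_of_pairEmbedding n hn φ (Subtype.val_injective.comp D.injective) _ hm
    (Fin.last r) hk
  have hδ : (if Even (n t) then 0 else 1) = n t % 2 := by
    split_ifs with h <;> rw [Nat.even_iff] at h <;> omega
  rw [sum_halfMult, Fintype.card_fin] at this
  omega
end

section
/- For every finite abelian group G there exist D_0 ∈ ℕ and k_0 ∈ ℕ such that D_k(G) = D_0 + k·exp(G) for all k ≥ k_0. In other words, the sequence (D_k(G) − k·exp(G))_{k∈ℕ} is eventually constant. -/
open Multiset

/-!
Every sequence of length greater than `|G| (exp(G) - 1)` contains some element `exp(G)` times,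
hence a zero-sum subsequence of length `exp(G)`. Splitting it off gives
`D_{k+1}(G) ≤ max (D_k(G) + exp(G)) (|G| (exp(G) - 1) + 1)`, and the maximum is the first entry
as soon as `k > |G| (exp(G) - 1)`. So `D_k(G) - k exp(G)` is eventually a non-increasing sequence
of natural numbers, hence eventually constant, and it is never truncated because
`k exp(G) ≤ D_k(G)`.
-/

theorem Multiset.exists_replicate_le_of_card_mul_lt {α : Type*} [Fintype α] {S : Multiset α}
    {n : ℕ} (h : Fintype.card α * n < card S) : ∃ a, replicate (n + 1) a ≤ S := by
  classical
  by_contra! hS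
  have hcount : ∀ a, S.count a ≤ n := fun a => by
    have := mt Multiset.le_count_iff_replicate_le.mp (hS a)
    omega
  have : card S ≤ Fintype.card α * n :=
    calc card S = ∑ a, S.count a := (Multiset.sum_count_eq_card (by simp)).symm
      _ ≤ ∑ _a : α, n := Finset.sum_le_sum fun a _ => hcount a
      _ = Fintype.card α * n := by simp
  omega

section ZeroSum

variable {G : Type*} [AddCommGroup G]

theorem HasKDisjointZeroSum.add_left {k : ℕ} {S T : Multiset G} (hT : IsZeroSumSeq T)
    (hS : HasKDisjointZeroSum k S) : HasKDisjointZeroSum (k + 1) (T + S) := by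
  obtain ⟨U, hUcard, hUzero, hUle⟩ := hS
  refine ⟨T ::ₘ U, by simp [hUcard], ?_, ?_⟩
  · intro A hA
    rcases Multiset.mem_cons.mp hA with rfl | hA
    exacts [hT, hUzero A hA]
  · simpa only [Multiset.sum_cons] using add_le_add_right hUle T

theorem IsZeroSumSeq.addOrderOf_le_card {A : Multiset G} {n : ℕ} {g : G} (hA : IsZeroSumSeq A)
    (hle : A ≤ replicate n g) : addOrderOf g ≤ card A := by
  have hrep : A = replicate (card A) g :=
    eq_replicate_card.mpr fun _ hb => eq_of_mem_replicate (mem_of_le hle hb)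
  have hsum : card A • g = 0 := by rw [← Multiset.sum_replicate, ← hrep]; exact hA.2
  exact Nat.le_of_dvd (Multiset.card_pos.mpr hA.1) (addOrderOf_dvd_of_nsmul_eq_zero hsum)

theorem HasKDisjointZeroSum.mul_addOrderOf_le {k n : ℕ} {g : G}
    (h : HasKDisjointZeroSum k (replicate n g)) : k * addOrderOf g ≤ n := by
  obtain ⟨T, rfl, hzero, hle⟩ := h
  have hcard : ∀ m ∈ T.map card, addOrderOf g ≤ m := by
    simp only [Multiset.mem_map, forall_exists_index, and_imp]
    rintro _ A hA rfl
    exact (hzero A hA).addOrderOf_le_card ((Multiset.le_sum_of_mem hA).trans hle)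
  calc card T * addOrderOf g ≤ (T.map card).sum := by
        simpa using Multiset.card_nsmul_le_sum hcard
    _ = card T.sum := (Multiset.card_join T).symm
    _ ≤ n := by simpa using Multiset.card_le_card hle

end ZeroSum

section FiniteGroup

variable {G : Type*} [AddCommGroup G] [Fintype G]

theorem exists_isZeroSumSeq_card_le_exponent {S : Multiset G}
    (hS : Fintype.card G * (AddMonoid.exponent G - 1) < card S) :
    ∃ T ≤ S, IsZeroSumSeq T ∧ card T ≤ AddMonoid.exponent G := by
  have he : 0 < AddMonoid.exponent G := AddMonoid.exponent_pos.mpr .of_finite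
  obtain ⟨g, hg⟩ := Multiset.exists_replicate_le_of_card_mul_lt hS
  rw [Nat.sub_add_cancel he] at hg
  refine ⟨replicate (AddMonoid.exponent G) g, hg,
    ⟨card_pos.mp (by simpa using he), ?_⟩, by simp⟩
  rw [sum_replicate, AddMonoid.exponent_nsmul_eq_zero]

theorem hasKDisjointZeroSum_succ_of_max_le {k ℓ : ℕ}
    (hℓ : ∀ S : Multiset G, ℓ ≤ card S → HasKDisjointZeroSum k S) {S : Multiset G}
    (hS : max (ℓ + AddMonoid.exponent G) (Fintype.card G * (AddMonoid.exponent G - 1) + 1)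
      ≤ card S) :
    HasKDisjointZeroSum (k + 1) S := by
  classical
  obtain ⟨T, hTS, hT, hTcard⟩ := exists_isZeroSumSeq_card_le_exponent (by omega : _ < card S)
  have hrest : ℓ ≤ card (S - T) := by rw [Multiset.card_sub hTS]; omega
  simpa [add_tsub_cancel_of_le hTS] using (hℓ _ hrest).add_left hT

theorem exists_forall_card_le_hasKDisjointZeroSum (k : ℕ) :
    ∃ ℓ, ∀ S : Multiset G, ℓ ≤ card S → HasKDisjointZeroSum k S := by
  induction k with
  | zero => exact ⟨0, fun S _ => ⟨0, rfl, by simp, Multiset.zero_le S⟩⟩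
  | succ k ih =>
    obtain ⟨ℓ, hℓ⟩ := ih
    exact ⟨_, fun S hS => hasKDisjointZeroSum_succ_of_max_le hℓ hS⟩

theorem hasKDisjointZeroSum_of_Dk_le {k : ℕ} {S : Multiset G} (hS : Dk G k ≤ card S) :
    HasKDisjointZeroSum k S :=
  Nat.sInf_mem (exists_forall_card_le_hasKDisjointZeroSum k) S hS

theorem Dk_succ_le_s10 (k : ℕ) :
    Dk G (k + 1) ≤
      max (Dk G k + AddMonoid.exponent G) (Fintype.card G * (AddMonoid.exponent G - 1) + 1) :=
  Nat.sInf_le fun _ =>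
    hasKDisjointZeroSum_succ_of_max_le fun _ => hasKDisjointZeroSum_of_Dk_le

theorem mul_exponent_le_Dk (k : ℕ) : k * AddMonoid.exponent G ≤ Dk G k := by
  refine le_csInf (exists_forall_card_le_hasKDisjointZeroSum k) fun ℓ hℓ => ?_
  obtain ⟨g, hg⟩ := AddMonoid.exists_addOrderOf_eq_exponent (.of_finite (G := G))
  rw [← hg]
  exact (hℓ (replicate ℓ g) (by simp)).mul_addOrderOf_le

theorem Dk_succ_sub_le {k : ℕ} (hk : Fintype.card G * (AddMonoid.exponent G - 1) < k) :
    Dk G (k + 1) - (k + 1) * AddMonoid.exponent G ≤ Dk G k - k * AddMonoid.exponent G := by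
  have he : 0 < AddMonoid.exponent G := AddMonoid.exponent_pos.mpr .of_finite
  have hkD : k ≤ Dk G k := (Nat.le_mul_of_pos_right k he).trans (mul_exponent_le_Dk k)
  have := Dk_succ_le_s10 (G := G) k
  rw [add_mul, one_mul]
  omega

end FiniteGroup

theorem statement10 {G : Type*} [AddCommGroup G] [Fintype G] :
    ∃ D₀ k₀ : ℕ, ∀ k : ℕ, k₀ ≤ k → Dk G k = D₀ + k * AddMonoid.exponent G := by
  obtain ⟨M, hM⟩ : ∃ M, Fintype.card G * (AddMonoid.exponent G - 1) < M :=
    ⟨_, Nat.lt_succ_self _⟩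
  have hanti : Antitone fun n => Dk G (M + n) - (M + n) * AddMonoid.exponent G :=
    antitone_nat_of_succ_le fun n => Dk_succ_sub_le (lt_add_of_lt_of_nonneg hM n.zero_le)
  obtain ⟨n₀, hn₀⟩ := WellFoundedLT.antitone_chain_condition hanti
  refine ⟨Dk G (M + n₀) - (M + n₀) * AddMonoid.exponent G, M + n₀, fun k hk => ?_⟩
  obtain ⟨n, rfl⟩ := Nat.exists_eq_add_of_le hk
  have hconst := hn₀ (n₀ + n) (Nat.le_add_right n₀ n)
  have hlower := mul_exponent_le_Dk (G := G) (M + (n₀ + n))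
  rw [add_assoc]
  omega
end

section
/- Let k, r ≥ 1 and 0 ≤ s ≤ r. Then D_k(C_2^r) ≤ D_{D_k(C_2^s) − s}(C_2^{r−s}) + s. -/
open Multiset

/-!
Write `k' = D_k(C₂^s) - s`. If the terms of a sequence `S` over `C₂^r` span a subspace of
dimension less than `s`, that subspace embeds into `C₂^s` and `|S| ≥ k' + s ≥ D_k(C₂^s)` suffices.
Otherwise `S` contains `s` linearly independent terms, spanning `W ≅ C₂^s`. Modulo `W` the rest
of `S` has length at least `D_{k'}(C₂^{r-s})`, so it contains `k'` disjoint nonempty subsequences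
with sums in `W`. These `k'` sums and the `s` independent terms are `k' + s ≥ D_k(C₂^s)` elements
of `W`, hence contain `k` disjoint zero-sum subsequences; substituting each of the `k'`
subsequences back for its sum gives `k` disjoint zero-sum subsequences of `S`.
-/

open Module

namespace Multiset

variable {α β : Type*}

theorem exists_le_map_eq_of_le_map_s19 (f : α → β) {S : Multiset α} {U : Multiset β}
    (h : U ≤ S.map f) : ∃ B ≤ S, B.map f = U := by
  classical
  induction S using Multiset.induction generalizing U with
  | empty => exact ⟨0, le_rfl, (le_zero.mp h).symm⟩
  | cons a S ih =>
    rw [map_cons] at h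
    by_cases hfa : f a ∈ U
    · obtain ⟨B, hBS, hBU⟩ := ih (by simpa using erase_le_erase (f a) h)
      exact ⟨a ::ₘ B, cons_le_cons a hBS, by rw [map_cons, hBU, cons_erase hfa]⟩
    · obtain ⟨B, hBS, hBU⟩ := ih ((le_cons_of_notMem hfa).1 h)
      exact ⟨B, hBS.trans (le_cons_self S a), hBU⟩

theorem exists_sum_le_map_eq_of_sum_le_map (f : α → β) {T : Multiset (Multiset β)}
    {S : Multiset α} (h : T.sum ≤ S.map f) :
    ∃ C : Multiset (Multiset α), C.sum ≤ S ∧ C.map (map f) = T := by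
  classical
  induction T using Multiset.induction generalizing S with
  | empty => exact ⟨0, zero_le _, rfl⟩
  | cons A T ih =>
    rw [sum_cons] at h
    obtain ⟨B, hBS, hBA⟩ := exists_le_map_eq_of_le_map_s19 f ((le_add_right A T.sum).trans h)
    have hsplit : S.map f = A + (S - B).map f := by
      rw [← hBA, ← map_add, add_tsub_cancel_of_le hBS]
    obtain ⟨C, hCS, hCT⟩ := ih (S := S - B) (le_of_add_le_add_left (hsplit ▸ h))
    refine ⟨B ::ₘ C, ?_, by rw [map_cons, hBA, hCT]⟩
    calc (B ::ₘ C).sum = B + C.sum := sum_cons B C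
      _ ≤ B + (S - B) := by gcongr
      _ = S := add_tsub_cancel_of_le hBS

theorem exists_le_card_eq_s19 {S : Multiset α} {n : ℕ} (h : n ≤ card S) :
    ∃ T ≤ S, card T = n := by
  refine ⟨S.toList.take n, ?_, by simpa using h⟩
  conv_rhs => rw [← coe_toList S]
  exact coe_le.mpr (S.toList.take_sublist n).subperm

end Multiset

namespace HasKDisjointZeroSum

variable {G H : Type*} [AddCommGroup G] [AddCommGroup H] {k : ℕ}

theorem mono {S S' : Multiset G} (h : HasKDisjointZeroSum k S) (hS : S ≤ S') :
    HasKDisjointZeroSum k S' :=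
  let ⟨T, hcard, hzero, hle⟩ := h
  ⟨T, hcard, hzero, hle.trans hS⟩

theorem exists_lift_of_map {F : Type*} [FunLike F G H] [AddMonoidHomClass F G H] (f : F)
    {S : Multiset G} (h : HasKDisjointZeroSum k (S.map f)) :
    ∃ T : Multiset (Multiset G), Multiset.card T = k ∧
      (∀ B ∈ T, B ≠ 0 ∧ f B.sum = 0) ∧ T.sum ≤ S := by
  obtain ⟨T₀, hcard, hzero, hle⟩ := h
  obtain ⟨T, hTS, rfl⟩ := Multiset.exists_sum_le_map_eq_of_sum_le_map f hle
  refine ⟨T, by rw [← hcard, Multiset.card_map], fun B hB => ?_, hTS⟩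
  obtain ⟨hne, hsum⟩ := hzero _ (Multiset.mem_map_of_mem _ hB)
  exact ⟨fun h0 => hne (by rw [h0, Multiset.map_zero]), by rwa [map_multiset_sum]⟩

theorem of_map {F : Type*} [FunLike F G H] [AddMonoidHomClass F G H] (f : F)
    {S : Multiset G} (hf : ∀ T ≤ S, f T.sum = 0 → T.sum = 0)
    (h : HasKDisjointZeroSum k (S.map f)) : HasKDisjointZeroSum k S := by
  obtain ⟨T, hcard, hzero, hle⟩ := exists_lift_of_map f h
  refine ⟨T, hcard, fun B hB => ⟨(hzero B hB).1, hf B ?_ (hzero B hB).2⟩, hle⟩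
  exact (Multiset.le_sum_of_mem hB).trans hle

/-- The zero-sum subsequence containing the term `B.sum`, if any, takes the terms of `B` in
its place. -/
theorem of_cons_sum [DecidableEq G] {B N : Multiset G} (hB : B ≠ 0)
    (h : HasKDisjointZeroSum k (B.sum ::ₘ N)) : HasKDisjointZeroSum k (B + N) := by
  obtain ⟨T, hcard, hzero, hle⟩ := h
  by_cases hσ : B.sum ∈ T.sum
  · obtain ⟨A, hAT, hσA⟩ := Multiset.mem_join.mp hσ
    have hTsum : T.sum = A + (T.erase A).sum := by
      rw [← Multiset.sum_cons, Multiset.cons_erase hAT]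
    refine ⟨(A.erase B.sum + B) ::ₘ T.erase A, ?_, ?_, ?_⟩
    · rw [Multiset.card_cons, Multiset.card_erase_add_one hAT, hcard]
    · intro A' hA'
      rcases Multiset.mem_cons.mp hA' with rfl | hA'
      · refine ⟨fun h0 => hB (add_eq_zero.mp h0).2, ?_⟩
        rw [Multiset.sum_add, add_comm, Multiset.sum_erase hσA, (hzero A hAT).2]
      · exact hzero A' (Multiset.mem_of_mem_erase hA')
    · have hrest : A.erase B.sum + (T.erase A).sum ≤ N := by
        have := Multiset.erase_le_erase B.sum hle
        rwa [Multiset.erase_cons_head, hTsum, Multiset.erase_add_left_pos _ hσA] at this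
      calc ((A.erase B.sum + B) ::ₘ T.erase A).sum
          = B + (A.erase B.sum + (T.erase A).sum) := by
            rw [Multiset.sum_cons]; abel
        _ ≤ B + N := by gcongr
  · exact ⟨T, hcard, hzero, ((Multiset.le_cons_of_notMem hσ).1 hle).trans
      (Multiset.le_add_left N B)⟩

theorem of_map_sum_add [DecidableEq G] {T : Multiset (Multiset G)} {Γ : Multiset G}
    (hT : ∀ B ∈ T, B ≠ 0) (h : HasKDisjointZeroSum k (T.map Multiset.sum + Γ)) :
    HasKDisjointZeroSum k (T.sum + Γ) := by
  induction T using Multiset.induction generalizing Γ with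
  | empty => simpa using h
  | cons B T ih =>
    rw [Multiset.map_cons, Multiset.cons_add] at h
    have h' := of_cons_sum (hT B (Multiset.mem_cons_self B T)) h
    rw [add_left_comm] at h'
    rw [Multiset.sum_cons, add_assoc, add_left_comm]
    exact ih (fun B' hB' => hT B' (Multiset.mem_cons_of_mem hB')) h'

end HasKDisjointZeroSum

section LinearAlgebra

variable {K V : Type*} [Field K] [AddCommGroup V] [Module K V]

theorem exists_linearMap_ker_eq [FiniteDimensional K V] (W : Submodule K V) {d : ℕ}
    (hd : finrank K V - finrank K W = d) :
    ∃ τ : V →ₗ[K] (Fin d → K), LinearMap.ker τ = W := by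
  let e := (finBasisOfFinrankEq K (V ⧸ W) (W.finrank_quotient.trans hd)).equivFun
  exact ⟨e.toLinearMap ∘ₗ W.mkQ, by rw [LinearEquiv.ker_comp, Submodule.ker_mkQ]⟩

theorem exists_linearMap_disjoint_ker (W : Submodule K V) [FiniteDimensional K W] {d : ℕ}
    (hd : finrank K W ≤ d) :
    ∃ ρ : V →ₗ[K] (Fin d → K), Disjoint W (LinearMap.ker ρ) := by
  obtain ⟨f, hf⟩ :=
    (finrank_le_iff_exists_linearMap (R := K) (M := W) (M' := Fin d → K)).mp
      (by rwa [finrank_fin_fun])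
  obtain ⟨ρ, hρ⟩ := LinearMap.exists_extend f
  refine ⟨ρ, Submodule.disjoint_def.mpr fun x hx hρx => ?_⟩
  have hfx : f ⟨x, hx⟩ = 0 := by rw [← hρ]; exact hρx
  simpa using hf (hfx.trans (_root_.map_zero f).symm)

theorem exists_linearIndepOn_subset_card_eq (S : Finset V) {s : ℕ}
    (hs : s ≤ finrank K (Submodule.span K (S : Set V))) :
    ∃ c ⊆ S, c.card = s ∧ LinearIndepOn K id (c : Set V) := by
  classical
  obtain ⟨b, hbS, hspan, hb⟩ := exists_linearIndependent K (S : Set V)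
  replace hb : LinearIndepOn K id b := hb
  have hfin : b.Finite := S.finite_toSet.subset hbS
  have hbc : finrank K (Submodule.span K (S : Set V)) = hfin.toFinset.card := by
    rw [← hspan, ← finrank_span_finset_eq_card (by simpa using hb), hfin.coe_toFinset]
  obtain ⟨c, hcb, hcard⟩ := Finset.exists_subset_card_eq (hs.trans hbc.le)
  have hcb' : (c : Set V) ⊆ b := fun x hx => hfin.mem_toFinset.mp (hcb hx)
  exact ⟨c, fun x hx => Finset.mem_coe.mp (hbS (hcb' hx)), hcard, hb.mono hcb'⟩

end LinearAlgebra

section ElementaryAbelian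

variable {V : Type*} [AddCommGroup V] [Module (ZMod 2) V] [FiniteDimensional (ZMod 2) V]

/-- Over `ZMod 2` a nontrivial linear relation is a nonempty zero-sum subsequence. -/
theorem exists_zero_sum_le_of_finrank_lt_card {S : Multiset V}
    (h : finrank (ZMod 2) V < Multiset.card S) : ∃ T ≤ S, T ≠ 0 ∧ T.sum = 0 := by
  classical
  have hdep : ¬ LinearIndependent (ZMod 2) (fun x : S => (x : V)) := fun hind =>
    (hind.fintype_card_le_finrank.trans_lt (by rwa [Multiset.card_coe])).false
  obtain ⟨g, hg, i, hi⟩ := Fintype.not_linearIndependent_iff.mp hdep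
  have hg1 : ∀ j, g j ≠ 0 → g j = 1 := by
    intro j; generalize g j = a; revert a; decide
  let A := Finset.univ.filter fun j => g j ≠ 0
  refine ⟨A.val.map (fun x : S => (x : V)), ?_, ?_, ?_⟩
  · calc A.val.map (fun x : S => (x : V))
        ≤ (Finset.univ : Finset S).val.map (fun x : S => (x : V)) :=
          Multiset.map_le_map (Finset.val_le_iff.mpr (Finset.subset_univ A))
      _ = S := Multiset.map_univ_coe S
  · rw [Ne, Multiset.map_eq_zero, Finset.val_eq_zero]
    exact Finset.ne_empty_of_mem (a := i) (by simp [A, hi])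
  · calc (A.val.map (fun x : S => (x : V))).sum = ∑ j ∈ A, g j • (j : V) :=
          Finset.sum_congr rfl fun j hj => by
            rw [hg1 j (Finset.mem_filter.mp hj).2, one_smul]
      _ = ∑ j, g j • (j : V) := Finset.sum_subset (Finset.subset_univ A) fun j _ hj => by
          rw [show g j = 0 by simpa [A] using hj, zero_smul]
      _ = 0 := hg

theorem hasKDisjointZeroSum_of_mul_le_card (k : ℕ) {S : Multiset V}
    (h : k * (finrank (ZMod 2) V + 1) ≤ Multiset.card S) : HasKDisjointZeroSum k S := by
  classical
  induction k generalizing S with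
  | zero => exact ⟨0, rfl, by simp, zero_le _⟩
  | succ k ih =>
    obtain ⟨S', hS'S, hS'card⟩ :=
      Multiset.exists_le_card_eq_s19 ((Nat.le_mul_of_pos_left _ k.succ_pos).trans h)
    obtain ⟨T₀, hT₀S', hT₀ne, hT₀sum⟩ := exists_zero_sum_le_of_finrank_lt_card
      (hS'card ▸ Nat.lt_succ_self _ : finrank (ZMod 2) V < Multiset.card S')
    have hT₀S := hT₀S'.trans hS'S
    have hT₀card := hS'card ▸ Multiset.card_le_card hT₀S'
    obtain ⟨T, hTcard, hTzero, hTle⟩ := ih (S := S - T₀) (by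
      rw [Multiset.card_sub hT₀S, Nat.succ_mul] at *; omega)
    refine ⟨T₀ ::ₘ T, by rw [Multiset.card_cons, hTcard], ?_, ?_⟩
    · intro A hA
      rcases Multiset.mem_cons.mp hA with rfl | hA
      exacts [⟨hT₀ne, hT₀sum⟩, hTzero A hA]
    · calc (T₀ ::ₘ T).sum = T₀ + T.sum := Multiset.sum_cons T₀ T
        _ ≤ T₀ + (S - T₀) := by gcongr
        _ = S := add_tsub_cancel_of_le hT₀S

theorem hasKDisjointZeroSum_of_Dk_le_card {k : ℕ} {S : Multiset V}
    (h : Dk V k ≤ Multiset.card S) : HasKDisjointZeroSum k S :=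
  Nat.sInf_mem (s := {ℓ | ∀ S : Multiset V, ℓ ≤ Multiset.card S → HasKDisjointZeroSum k S})
    ⟨_, fun _ => hasKDisjointZeroSum_of_mul_le_card k⟩ S h

theorem le_Dk (k : ℕ) : k ≤ Dk V k := by
  obtain ⟨T, hcard, hzero, hle⟩ :=
    hasKDisjointZeroSum_of_Dk_le_card (k := k) (S := Multiset.replicate (Dk V k) (0 : V))
      (by rw [Multiset.card_replicate])
  calc k = Multiset.card (T.map Multiset.card) • 1 := by simp [hcard]
    _ ≤ (T.map Multiset.card).sum := Multiset.card_nsmul_le_sum fun n hn => by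
        obtain ⟨A, hA, rfl⟩ := Multiset.mem_map.mp hn
        exact Multiset.card_pos.mpr (hzero A hA).1
    _ = Multiset.card T.sum := (Multiset.card_join T).symm
    _ ≤ Dk V k := by simpa using Multiset.card_le_card hle

theorem hasKDisjointZeroSum_of_forall_mem (W : Submodule (ZMod 2) V) {k s : ℕ}
    (hW : finrank (ZMod 2) W ≤ s) {M : Multiset V} (hM : ∀ x ∈ M, x ∈ W)
    (hcard : Dk (Fin s → ZMod 2) k ≤ Multiset.card M) : HasKDisjointZeroSum k M := by
  obtain ⟨ρ, hρ⟩ := exists_linearMap_disjoint_ker W hW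
  refine HasKDisjointZeroSum.of_map ρ (fun T hT hρT => ?_)
    (hasKDisjointZeroSum_of_Dk_le_card (by rwa [Multiset.card_map]))
  exact Submodule.disjoint_def.mp hρ _
    (multiset_sum_mem _ fun x hx => hM x (Multiset.mem_of_le hT hx)) hρT

theorem hasKDisjointZeroSum_of_linearIndepOn (k : ℕ) {c : Finset V}
    (hc : LinearIndepOn (ZMod 2) id (c : Set V)) {S : Multiset V} (hcS : c.val ≤ S)
    (hS : Dk (Fin (finrank (ZMod 2) V - c.card) → ZMod 2)
        (Dk (Fin c.card → ZMod 2) k - c.card) + c.card ≤ Multiset.card S) :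
    HasKDisjointZeroSum k S := by
  classical
  set W := Submodule.span (ZMod 2) (c : Set V)
  have hW : finrank (ZMod 2) W = c.card := finrank_span_finset_eq_card hc
  obtain ⟨τ, hτ⟩ := exists_linearMap_ker_eq W (d := finrank (ZMod 2) V - c.card) (by rw [hW])
  obtain ⟨T, hTcard, hT, hTS⟩ := HasKDisjointZeroSum.exists_lift_of_map τ
    (S := S - c.val) (hasKDisjointZeroSum_of_Dk_le_card
      (k := Dk (Fin c.card → ZMod 2) k - c.card) (by
      rw [Multiset.card_map, Multiset.card_sub hcS, Finset.card_val]; omega))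
  have hTW : ∀ B ∈ T, B.sum ∈ W := fun B hB => hτ ▸ (hT B hB).2
  have hM : HasKDisjointZeroSum k (T.map Multiset.sum + c.val) := by
    refine hasKDisjointZeroSum_of_forall_mem W hW.le (fun x hx => ?_) ?_
    · rcases Multiset.mem_add.mp hx with hx | hx
      · obtain ⟨B, hB, rfl⟩ := Multiset.mem_map.mp hx
        exact hTW B hB
      · exact Submodule.subset_span hx
    · rw [Multiset.card_add, Multiset.card_map, hTcard, Finset.card_val]
      omega
  refine (HasKDisjointZeroSum.of_map_sum_add (fun B hB => (hT B hB).1) hM).mono ?_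
  calc T.sum + c.val ≤ (S - c.val) + c.val := by gcongr
    _ = S := tsub_add_cancel_of_le hcS

theorem hasKDisjointZeroSum_of_card_le_s19 (k s : ℕ) {S : Multiset V}
    (hS : Dk (Fin (finrank (ZMod 2) V - s) → ZMod 2) (Dk (Fin s → ZMod 2) k - s) + s ≤
      Multiset.card S) :
    HasKDisjointZeroSum k S := by
  classical
  by_cases hrank : s ≤ finrank (ZMod 2) (Submodule.span (ZMod 2) (S.toFinset : Set V))
  · obtain ⟨c, hcS, rfl, hc⟩ := exists_linearIndepOn_subset_card_eq S.toFinset hrank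
    refine hasKDisjointZeroSum_of_linearIndepOn k hc ?_ hS
    exact (Multiset.le_iff_subset c.nodup).mpr fun x hx => Multiset.mem_toFinset.mp (hcS hx)
  · refine hasKDisjointZeroSum_of_forall_mem _ (not_le.mp hrank).le
      (fun x hx => Submodule.subset_span (Multiset.mem_toFinset.mpr hx)) ?_
    have := le_Dk (V := Fin (finrank (ZMod 2) V - s) → ZMod 2) (Dk (Fin s → ZMod 2) k - s)
    omega

end ElementaryAbelian

theorem statement19_general (k r s : ℕ) :
    Dk (Fin r → ZMod 2) k ≤
      Dk (Fin (r - s) → ZMod 2) (Dk (Fin s → ZMod 2) k - s) + s :=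
  Nat.sInf_le fun S hS => hasKDisjointZeroSum_of_card_le_s19 k s (by rwa [finrank_fin_fun])

theorem statement19 (k r s : ℕ) (hk : 1 ≤ k) (hr : 1 ≤ r) (hs : s ≤ r) :
    Dk (Fin r → ZMod 2) k ≤
      Dk (Fin (r - s) → ZMod 2) (Dk (Fin s → ZMod 2) k - s) + s :=
  statement19_general k r s
end
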